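/- arXiv:math/0309125 — 5 statements merged into one kernel-verified Lean document; each statement's English description precedes it below -/
import Mathlib

section
/- Let K be a field of characteristic 0, u,v ∈ K[x,y] with deg v ≥ 1, and q a one-variable polynomial over K. If the total degree of u+q(v) is strictly greater than the total degree of u, then deg(u+q(v)) = deg q · deg v. -/
open MvPolynomial

namespace MvPolynomial

variable {σ R : Type*}

theorem totalDegree_add_eq_right_of_lt_totalDegree_add [CommSemiring R] {p q : MvPolynomial σ R}
    (h : p.totalDegree < (p + q).totalDegree) : (p + q).totalDegree = q.totalDegree := by
  have hpq : p.totalDegree < q.totalDegree := by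
    by_contra! hqp
    exact h.not_ge ((totalDegree_add p q).trans (max_le le_rfl hqp))
  exact totalDegree_add_eq_right_of_totalDegree_lt hpq

theorem totalDegree_aeval_le [CommSemiring R] (v : MvPolynomial σ R) (q : Polynomial R) :
    (Polynomial.aeval v q).totalDegree ≤ q.natDegree * v.totalDegree := by
  rw [Polynomial.aeval_eq_sum_range]
  refine (totalDegree_finsetSum _ _).trans (Finset.sup_le fun i hi => ?_)
  calc (q.coeff i • v ^ i).totalDegree ≤ (v ^ i).totalDegree := totalDegree_smul_le _ _
    _ ≤ i * v.totalDegree := totalDegree_pow v i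
    _ ≤ q.natDegree * v.totalDegree :=
      Nat.mul_le_mul_right _ (Nat.lt_succ_iff.mp (Finset.mem_range.mp hi))

section IsDomain

variable [CommRing R] [IsDomain R]

theorem totalDegree_pow_of_isDomain {v : MvPolynomial σ R} (hv : v ≠ 0) (n : ℕ) :
    (v ^ n).totalDegree = n * v.totalDegree := by
  induction n with
  | zero => simp
  | succ n ih => rw [pow_succ, totalDegree_mul_of_isDomain (pow_ne_zero _ hv) hv, ih, Nat.succ_mul]

theorem totalDegree_C_mul_of_isDomain {a : R} (ha : a ≠ 0) (p : MvPolynomial σ R) :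
    (C a * p).totalDegree = p.totalDegree := by
  rcases eq_or_ne p 0 with rfl | hp
  · simp
  rw [totalDegree_mul_of_isDomain (C_ne_zero.mpr ha) hp, totalDegree_C, zero_add]

/-- Over a domain the leading term `lc q • v ^ deg q` cannot cancel, so the bound
`totalDegree_aeval_le` is attained; when `v` is constant both sides vanish. -/
theorem totalDegree_aeval (v : MvPolynomial σ R) (q : Polynomial R) :
    (Polynomial.aeval v q).totalDegree = q.natDegree * v.totalDegree := by
  rcases Nat.eq_zero_or_pos v.totalDegree with hv | hv
  · simpa [hv] using totalDegree_aeval_le v q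
  rcases Nat.eq_zero_or_pos q.natDegree with hq | hq
  · obtain ⟨a, rfl⟩ := Polynomial.natDegree_eq_zero.mp hq
    simp
  have hv0 : v ≠ 0 := by rintro rfl; simp at hv
  have hlc : q.leadingCoeff ≠ 0 :=
    Polynomial.leadingCoeff_ne_zero.mpr (by rintro rfl; simp at hq)
  have hsplit : Polynomial.aeval v q =
      Polynomial.aeval v q.eraseLead + C q.leadingCoeff * v ^ q.natDegree := by
    conv_lhs => rw [← q.eraseLead_add_C_mul_X_pow]
    rw [map_add, map_mul, map_pow, Polynomial.aeval_X, Polynomial.aeval_C, algebraMap_eq]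
  have hlead : (C q.leadingCoeff * v ^ q.natDegree).totalDegree = q.natDegree * v.totalDegree := by
    rw [totalDegree_C_mul_of_isDomain hlc, totalDegree_pow_of_isDomain hv0]
  have hrest : (Polynomial.aeval v q.eraseLead).totalDegree < q.natDegree * v.totalDegree :=
    calc (Polynomial.aeval v q.eraseLead).totalDegree
        ≤ q.eraseLead.natDegree * v.totalDegree := totalDegree_aeval_le v _
      _ ≤ (q.natDegree - 1) * v.totalDegree :=
        Nat.mul_le_mul_right _ (Polynomial.eraseLead_natDegree_le q)
      _ < q.natDegree * v.totalDegree := Nat.mul_lt_mul_of_pos_right (by omega) hv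
  rw [hsplit, totalDegree_add_eq_right_of_totalDegree_lt (hlead ▸ hrest), hlead]

end IsDomain

end MvPolynomial

theorem totalDegree_add_comp_of_lt_general {K : Type*} [Field K]
    (u v : MvPolynomial (Fin 2) K) (q : Polynomial K)
    (h : u.totalDegree < (u + Polynomial.aeval v q).totalDegree) :
    (u + Polynomial.aeval v q).totalDegree = q.natDegree * v.totalDegree := by
  rw [totalDegree_add_eq_right_of_lt_totalDegree_add h, totalDegree_aeval]

/-- If `deg v ≥ 1` and the total degree of `u + q(v)` is strictly greater
than the total degree of `u`, then `deg (u + q(v)) = deg q · deg v`. -/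
theorem totalDegree_add_comp_of_lt {K : Type*} [Field K] [CharZero K]
    (u v : MvPolynomial (Fin 2) K) (hv : 1 ≤ v.totalDegree) (q : Polynomial K)
    (h : u.totalDegree < (u + Polynomial.aeval v q).totalDegree) :
    (u + Polynomial.aeval v q).totalDegree = q.natDegree * v.totalDegree :=
  totalDegree_add_comp_of_lt_general u v q h
end

section
/- Let K be a field of characteristic 0 and set u = x⁴y² − 2x³y + x² + xy and v = x⁶y³ − 3x⁵y² + 3x⁴y + 2x³y² − x³ − 3x²y + x + y in K[x,y]. Then the pair (u,v) is a birational morphism of A² over K: the subfield K(u,v) of K(x,y) generated over K by u and v equals K(x,y). -/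
open MvPolynomial in
/-- For `u = x⁴y² − 2x³y + x² + xy` and
`v = x⁶y³ − 3x⁵y² + 3x⁴y + 2x³y² − x³ − 3x²y + x + y`, the pair `(u, v)` is a birational
morphism of the affine plane over any field `K` of characteristic 0: `K(u, v) = K(x, y)`. -/
theorem cassou_nogues_russell_birational {K : Type*} [Field K] [CharZero K] :
    IntermediateField.adjoin K
      {algebraMap (MvPolynomial (Fin 2) K) (FractionRing (MvPolynomial (Fin 2) K))
         (X 0 ^ 4 * X 1 ^ 2 - 2 * X 0 ^ 3 * X 1 + X 0 ^ 2 + X 0 * X 1),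
       algebraMap (MvPolynomial (Fin 2) K) (FractionRing (MvPolynomial (Fin 2) K))
         (X 0 ^ 6 * X 1 ^ 3 - 3 * X 0 ^ 5 * X 1 ^ 2 + 3 * X 0 ^ 4 * X 1
            + 2 * X 0 ^ 3 * X 1 ^ 2 - X 0 ^ 3 - 3 * X 0 ^ 2 * X 1 + X 0 + X 1)} = ⊤ := by
  classical
  set R := MvPolynomial (Fin 2) K with hR
  set L := FractionRing R with hL
  set A : R →+* L := algebraMap R L with hA
  have hAinj : Function.Injective A := IsFractionRing.injective R L
  set u : R := X 0 ^ 4 * X 1 ^ 2 - 2 * X 0 ^ 3 * X 1 + X 0 ^ 2 + X 0 * X 1 with hu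
  set v : R := X 0 ^ 6 * X 1 ^ 3 - 3 * X 0 ^ 5 * X 1 ^ 2 + 3 * X 0 ^ 4 * X 1
      + 2 * X 0 ^ 3 * X 1 ^ 2 - X 0 ^ 3 - 3 * X 0 ^ 2 * X 1 + X 0 + X 1 with hv
  set F := IntermediateField.adjoin K {A u, A v} with hF
  -- basic memberships
  have hU : A u ∈ F := IntermediateField.subset_adjoin K _ (Set.mem_insert _ _)
  have hV : A v ∈ F :=
    IntermediateField.subset_adjoin K _ (Set.mem_insert_of_mem _ rfl)
  -- nonzeroness of some polynomials, via evaluation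
  have hvne : v ≠ 0 := by
    intro h
    have := congrArg (eval (fun _ : Fin 2 => (1 : K))) h
    simp [hv] at this
    norm_num at this
  have hwne : (X 0 ^ 2 * X 1 - X 0 : R) ≠ 0 := by
    intro h
    have := congrArg (eval (fun i : Fin 2 => if i = 0 then (1 : K) else 2)) h
    simp at this
    norm_num at this
  have htne : (X 0 * X 1 - 1 : R) ≠ 0 := by
    intro h
    have := congrArg (eval (fun _ : Fin 2 => (0 : K))) h
    simp at this
  have hxne : (X 0 : R) ≠ 0 := X_ne_zero 0
  have hAne : ∀ p : R, p ≠ 0 → A p ≠ 0 := fun p hp h => hp (hAinj (by simpa using h))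
  -- key polynomial identities
  have key1 : v * (X 0 ^ 2 * X 1 - X 0) = u ^ 2 - u := by rw [hu, hv]; ring
  have key2 : u - (X 0 ^ 2 * X 1 - X 0) ^ 2 = X 0 * X 1 := by rw [hu]; ring
  have key3 : (X 0 : R) * (X 0 * X 1 - 1) = X 0 ^ 2 * X 1 - X 0 := by ring
  -- w = u(u-1)/v is in F
  have hwF : A (X 0 ^ 2 * X 1 - X 0) ∈ F := by
    have h1 : A (X 0 ^ 2 * X 1 - X 0) = (A u ^ 2 - A u) / A v := by
      rw [eq_div_iff (hAne v hvne), mul_comm, ← map_mul, key1, map_sub, map_pow]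
    rw [h1]
    exact F.div_mem (F.sub_mem (pow_mem hU 2) hU) hV
  -- t = xy is in F
  have htF : A (X 0 * X 1) ∈ F := by
    have h1 : A (X 0 * X 1) = A u - A (X 0 ^ 2 * X 1 - X 0) ^ 2 := by
      rw [← map_pow, ← map_sub, key2]
    rw [h1]
    exact F.sub_mem hU (pow_mem hwF 2)
  -- x is in F
  have hxF : A (X 0) ∈ F := by
    have h1 : A (X 0) = A (X 0 ^ 2 * X 1 - X 0) / (A (X 0 * X 1) - 1) := by
      rw [eq_div_iff]
      · rw [← map_one A, ← map_sub, ← map_mul, key3]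
      · rw [← map_one A, ← map_sub]
        exact hAne _ htne
    rw [h1]
    exact F.div_mem hwF (F.sub_mem htF F.one_mem)
  -- y is in F
  have hyF : A (X 1) ∈ F := by
    have h1 : A (X 1) = A (X 0 * X 1) / A (X 0) := by
      rw [eq_div_iff (hAne _ hxne), mul_comm, ← map_mul]
    rw [h1]
    exact F.div_mem htF hxF
  -- every polynomial image is in F
  have hXF : ∀ i : Fin 2, A (X i) ∈ F := by
    intro i
    fin_cases i
    · exact hxF
    · exact hyF
  have hpoly : ∀ p : R, A p ∈ F := by
    intro p
    induction p using MvPolynomial.induction_on with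
    | C a =>
        have : A (C a) = algebraMap K L a := by
          rw [hA, ← MvPolynomial.algebraMap_eq, ← IsScalarTower.algebraMap_apply K R L]
        rw [this]
        exact F.algebraMap_mem a
    | add p q hp hq => rw [map_add]; exact F.add_mem hp hq
    | mul_X p i hp => rw [map_mul]; exact F.mul_mem hp (hXF i)
  -- conclude
  rw [eq_top_iff]
  intro z _
  obtain ⟨p, q, _, rfl⟩ := IsFractionRing.div_surjective (A := R) z
  exact F.div_mem (hpoly p) (hpoly q)
end

section
/- Set u = x⁴y² − 2x³y + x² + xy and v = x⁶y³ − 3x⁵y² + 3x⁴y + 2x³y² − x³ − 3x²y + x + y in ℂ[x,y]. Then for all a, b, c ∈ ℂ with c ≠ 0, the polynomial c·u + b does not divide v + a in ℂ[x,y]; in particular no transformation of type (ET1') can decrease the sum of the degrees of the pair (u,v). -/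
open MvPolynomial in
private lemma cassou_nogues_key_not_dvd {σ : Type*} [DecidableEq σ] (i j : σ) (hij : i ≠ j) :
    ∀ a b c : ℂ, c ≠ 0 →
      ¬ ((C c * (X i ^ 4 * X j ^ 2 - 2 * X i ^ 3 * X j + X i ^ 2 + X i * X j) + C b) ∣
        ((X i ^ 6 * X j ^ 3 - 3 * X i ^ 5 * X j ^ 2 + 3 * X i ^ 4 * X j
            + 2 * X i ^ 3 * X j ^ 2 - X i ^ 3 - 3 * X i ^ 2 * X j + X i + X j :
            MvPolynomial σ ℂ)
          + C a)) := by
  rintro a b c hc ⟨q, hq⟩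
  obtain ⟨r, hr⟩ := IsAlgClosed.exists_pow_nat_eq (-b / c) (n := 2) (by norm_num)
  have hb : b = -(c * r ^ 2) := by field_simp at hr; linear_combination hr
  have hji := hij.symm
  have e1 := congrArg (eval (Function.update (fun _ => (0:ℂ)) i r)) hq
  have e2 := congrArg (eval (Function.update (fun _ => (0:ℂ)) i (-r))) hq
  simp [hb, Function.update_self, Function.update_of_ne hji] at e1 e2
  have ha : a = 0 := by linear_combination (e1 + e2) / 2
  have h0 : r * (r ^ 2 - 1) = 0 := by linear_combination (e2 - e1) / 2
  rcases mul_eq_zero.1 h0 with h | h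
  · -- r = 0, so b = 0, a = 0 : reduce via y ↦ 0 to X^2 ∣ X - X^3 in ℂ[X]
    subst ha
    have hb0 : b = 0 := by rw [hb, h]; ring
    subst hb0
    have e3 := congrArg
      (aeval (R := ℂ) (Function.update (fun _ => (0 : Polynomial ℂ)) i Polynomial.X)) hq
    simp [Function.update_self, Function.update_of_ne hji] at e3
    rw [mul_right_comm] at e3
    have e4 := congrArg (fun p => Polynomial.coeff p 1) e3
    simp [Polynomial.coeff_mul_X_pow'] at e4
  · -- r^2 = 1, so b = -c, a = 0 : evaluate at (2, 1/2)
    have hr1 : r ^ 2 = 1 := by linear_combination h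
    have e3 := congrArg
      (eval (Function.update (Function.update (fun _ => (0:ℂ)) i 2) j (1/2))) hq
    simp [hb, hr1, ha, Function.update_self, Function.update_of_ne hji,
      Function.update_of_ne hij] at e3
    norm_num at e3

open MvPolynomial in
/-- For `u = x⁴y² − 2x³y + x² + xy` and
`v = x⁶y³ − 3x⁵y² + 3x⁴y + 2x³y² − x³ − 3x²y + x + y` in `ℂ[x,y]`: for all `a, b, c ∈ ℂ`
with `c ≠ 0`, the polynomial `c·u + b` does not divide `v + a`; in particular no
transformation of type (ET1') can decrease the sum of the degrees of `(u, v)`. -/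
theorem cassou_nogues_russell_no_et1' :
    (∀ a b c : ℂ, c ≠ 0 →
      ¬ ((C c * (X 0 ^ 4 * X 1 ^ 2 - 2 * X 0 ^ 3 * X 1 + X 0 ^ 2 + X 0 * X 1) + C b) ∣
        ((X 0 ^ 6 * X 1 ^ 3 - 3 * X 0 ^ 5 * X 1 ^ 2 + 3 * X 0 ^ 4 * X 1
            + 2 * X 0 ^ 3 * X 1 ^ 2 - X 0 ^ 3 - 3 * X 0 ^ 2 * X 1 + X 0 + X 1)
          + C a))) ∧
    (∀ (a b c : ℂ) (w : MvPolynomial (Fin 2) ℂ),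
      C c * (X 0 ^ 4 * X 1 ^ 2 - 2 * X 0 ^ 3 * X 1 + X 0 ^ 2 + X 0 * X 1) + C b ≠ 0 →
      w * (C c * (X 0 ^ 4 * X 1 ^ 2 - 2 * X 0 ^ 3 * X 1 + X 0 ^ 2 + X 0 * X 1) + C b) =
        (X 0 ^ 6 * X 1 ^ 3 - 3 * X 0 ^ 5 * X 1 ^ 2 + 3 * X 0 ^ 4 * X 1
            + 2 * X 0 ^ 3 * X 1 ^ 2 - X 0 ^ 3 - 3 * X 0 ^ 2 * X 1 + X 0 + X 1) + C a →
      (X 0 ^ 6 * X 1 ^ 3 - 3 * X 0 ^ 5 * X 1 ^ 2 + 3 * X 0 ^ 4 * X 1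
          + 2 * X 0 ^ 3 * X 1 ^ 2 - X 0 ^ 3 - 3 * X 0 ^ 2 * X 1 + X 0
          + X 1 : MvPolynomial (Fin 2) ℂ).totalDegree ≤ w.totalDegree) := by
  constructor
  · exact cassou_nogues_key_not_dvd (0 : ℕ) 1 (by norm_num)
  intro a b c w hne hmul
  rcases eq_or_ne c 0 with h | h
  · -- c = 0 : then c·u + b = C b with b ≠ 0, so w = b⁻¹·(v + a) has total degree ≥ deg v
    subst h
    rw [map_zero, zero_mul, zero_add] at hmul
    have hv : (X 0 ^ 6 * X 1 ^ 3 - 3 * X 0 ^ 5 * X 1 ^ 2 + 3 * X 0 ^ 4 * X 1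
          + 2 * X 0 ^ 3 * X 1 ^ 2 - X 0 ^ 3 - 3 * X 0 ^ 2 * X 1 + X 0
          + X 1 : MvPolynomial (Fin 2) ℂ) = w * C b + (- C a) := by
      linear_combination -hmul
    rw [hv]
    refine le_trans (totalDegree_add _ _) ?_
    simp only [totalDegree_neg, totalDegree_C, max_eq_left (Nat.zero_le _)]
    exact le_trans (totalDegree_mul _ _) (by simp [totalDegree_C])
  · exact absurd ⟨w, by linear_combination -hmul⟩
      (cassou_nogues_key_not_dvd (0 : Fin 2) 1 (by norm_num) a b c h)
end

section
/- The pair (x, yx² + y) ∈ ℝ[x,y]² is a birational morphism of A² over ℝ (the subfield ℝ(x, yx²+y) of ℝ(x,y) equals ℝ(x,y)), but the corresponding ℝ-algebra endomorphism x→x, y→yx²+y of ℝ[x,y] is not a product of simple affine contractions: it is not a composition of finitely many maps each of which is either an ℝ-algebra automorphism of ℝ[x,y] or the map τ_x given by x→x, y→xy. -/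
/-- The map `τ_x : x ↦ x, y ↦ xy`, as a `K`-algebra endomorphism of `K[x,y]`. -/
noncomputable def tauX (K : Type*) [Field K] :
    MvPolynomial (Fin 2) K →ₐ[K] MvPolynomial (Fin 2) K :=
  MvPolynomial.aeval ![MvPolynomial.X 0, MvPolynomial.X 0 * MvPolynomial.X 1]

/-- A simple affine contraction: a `K`-algebra endomorphism of `K[x,y]` that is either a
`K`-algebra automorphism or the map `τ_x : x ↦ x, y ↦ xy`. -/
def IsSimpleAffineContraction {K : Type*} [Field K]
    (ψ : MvPolynomial (Fin 2) K →ₐ[K] MvPolynomial (Fin 2) K) : Prop :=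
  (∃ e : MvPolynomial (Fin 2) K ≃ₐ[K] MvPolynomial (Fin 2) K, ψ = e) ∨ ψ = tauX K

/-- `φ` is a composition of finitely many simple affine contractions. -/
def IsProdOfSAC {K : Type*} [Field K]
    (φ : MvPolynomial (Fin 2) K →ₐ[K] MvPolynomial (Fin 2) K) : Prop :=
  ∃ L : List (MvPolynomial (Fin 2) K →ₐ[K] MvPolynomial (Fin 2) K),
    (∀ ψ ∈ L, IsSimpleAffineContraction ψ) ∧
    φ = L.foldr AlgHom.comp (AlgHom.id K (MvPolynomial (Fin 2) K))
/-- The pair `(u, v)` determines a birational morphism of the affine plane: the subfield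
`K(u, v)` of the rational function field `K(x, y)` generated over `K` by `u` and `v`
equals all of `K(x, y)`. -/
def IsBirationalPair {K : Type*} [Field K] (u v : MvPolynomial (Fin 2) K) : Prop :=
  IntermediateField.adjoin K
    {algebraMap (MvPolynomial (Fin 2) K) (FractionRing (MvPolynomial (Fin 2) K)) u,
     algebraMap (MvPolynomial (Fin 2) K) (FractionRing (MvPolynomial (Fin 2) K)) v} = ⊤

/-! Birationality: `y = (yx² + y)/(x² + 1)` lies in `ℝ(x, yx² + y)`.

For the second claim, pass to maps on points: `MvPolynomial.comap` turns a composite of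
endomorphisms into the composite of the point maps in reverse order. Automorphisms give
bijections of `K²`, while `τ_x` collapses the line `x = 0`; hence a product of simple affine
contractions whose point map is injective contains no `τ_x` and is an automorphism. Over `ℝ`
the point map `(a, b) ↦ (a, b(a² + 1))` is injective, yet `x ↦ x, y ↦ y(x² + 1)` is not
surjective: evaluated at complex points with `x = i` its image no longer depends on `y`. -/

open MvPolynomial

section Birational

variable {σ K : Type*} [Field K]

theorem IntermediateField.eq_top_of_algebraMap_X_mem
    (F : IntermediateField K (FractionRing (MvPolynomial σ K)))
    (hX : ∀ i, algebraMap (MvPolynomial σ K) (FractionRing (MvPolynomial σ K)) (X i) ∈ F) :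
    F = ⊤ := by
  have hpoly (p : MvPolynomial σ K) :
      algebraMap (MvPolynomial σ K) (FractionRing (MvPolynomial σ K)) p ∈ F := by
    induction p using MvPolynomial.induction_on with
    | C a =>
      rw [← MvPolynomial.algebraMap_eq, ← IsScalarTower.algebraMap_apply]
      exact F.algebraMap_mem a
    | add p q hp hq => rw [map_add]; exact F.add_mem hp hq
    | mul_X p i hp => rw [map_mul]; exact F.mul_mem hp (hX i)
  refine eq_top_iff.mpr fun z _ => ?_
  obtain ⟨a, b, -, rfl⟩ := IsFractionRing.div_surjective (A := MvPolynomial σ K) z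
  exact F.div_mem (hpoly a) (hpoly b)

theorem isBirationalPair_X_zero_X_one_mul_X_zero_sq_add_X_one :
    IsBirationalPair (X 0 : MvPolynomial (Fin 2) K) (X 1 * X 0 ^ 2 + X 1) := by
  set ι := algebraMap (MvPolynomial (Fin 2) K) (FractionRing (MvPolynomial (Fin 2) K))
  set F := IntermediateField.adjoin K {ι (X 0), ι (X 1 * X 0 ^ 2 + X 1)}
  have hx : ι (X 0) ∈ F := IntermediateField.subset_adjoin _ _ (Set.mem_insert _ _)
  have hv : ι (X 1 * X 0 ^ 2 + X 1) ∈ F :=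
    IntermediateField.subset_adjoin _ _ (Set.mem_insert_of_mem _ rfl)
  have hne : ι (X 0) ^ 2 + 1 ≠ 0 := by
    rw [← map_pow, ← map_one ι, ← map_add, Ne,
      IsFractionRing.to_map_eq_zero_iff (K := FractionRing (MvPolynomial (Fin 2) K))]
    intro h
    simpa using congrArg (eval 0) h
  have hy : ι (X 1) ∈ F := by
    have : ι (X 1) = ι (X 1 * X 0 ^ 2 + X 1) / (ι (X 0) ^ 2 + 1) := by
      rw [eq_div_iff hne, map_add, map_mul, map_pow]
      ring
    rw [this]
    exact F.div_mem hv (F.add_mem (pow_mem hx 2) F.one_mem)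
  refine IntermediateField.eq_top_of_algebraMap_X_mem F fun i => ?_
  fin_cases i
  exacts [hx, hy]

end Birational

section ProdOfSAC

variable {K : Type*} [Field K]

theorem comap_tauX_not_injective : ¬ Function.Injective (comap (tauX K)) := by
  intro h
  have : comap (tauX K) ![0, 0] = comap (tauX K) ![0, 1] := by
    funext i
    fin_cases i <;> simp [tauX]
  simpa using congrFun (h this) 1

theorem foldr_comp_eq_algEquiv_of_comap_injective
    (L : List (MvPolynomial (Fin 2) K →ₐ[K] MvPolynomial (Fin 2) K))
    (hL : ∀ ψ ∈ L, IsSimpleAffineContraction ψ)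
    (hinj : Function.Injective (comap (L.foldr AlgHom.comp (AlgHom.id K _)))) :
    ∃ e : MvPolynomial (Fin 2) K ≃ₐ[K] MvPolynomial (Fin 2) K,
      L.foldr AlgHom.comp (AlgHom.id K _) = e := by
  induction L with
  | nil => exact ⟨AlgEquiv.refl, rfl⟩
  | cons ψ L ih =>
    rw [List.foldr_cons] at hinj ⊢
    rw [comap_comp] at hinj
    rcases hL ψ List.mem_cons_self with ⟨e, rfl⟩ | rfl
    · have hF : Function.Injective (comap (L.foldr AlgHom.comp (AlgHom.id K _))) := by
        rw [← (comapEquiv e).injective_comp]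
        exact hinj
      obtain ⟨E, hE⟩ := ih (fun χ hχ => hL χ (List.mem_cons_of_mem _ hχ)) hF
      exact ⟨E.trans e, by rw [hE]; rfl⟩
    · exact absurd hinj.of_comp comap_tauX_not_injective

theorem IsProdOfSAC.exists_algEquiv {φ : MvPolynomial (Fin 2) K →ₐ[K] MvPolynomial (Fin 2) K}
    (hφ : IsProdOfSAC φ) (hinj : Function.Injective (comap φ)) :
    ∃ e : MvPolynomial (Fin 2) K ≃ₐ[K] MvPolynomial (Fin 2) K, φ = e := by
  obtain ⟨L, hL, rfl⟩ := hφ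
  exact foldr_comp_eq_algEquiv_of_comap_injective L hL hinj

end ProdOfSAC

section ScaleY

noncomputable def scaleY (R : Type*) [CommSemiring R] :
    MvPolynomial (Fin 2) R →ₐ[R] MvPolynomial (Fin 2) R :=
  aeval ![X 0, X 1 * X 0 ^ 2 + X 1]

theorem comap_scaleY_injective (K : Type*) [Field K] [LinearOrder K] [IsStrictOrderedRing K] :
    Function.Injective (comap (scaleY K)) := by
  intro p q h
  have h0 : p 0 = q 0 := by simpa [scaleY] using congrFun h 0
  have h1 : p 1 * (p 0 ^ 2 + 1) = q 1 * (p 0 ^ 2 + 1) := by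
    have := congrFun h 1
    simp only [comap_apply, scaleY, aeval_X, Matrix.cons_val_one, Matrix.cons_val_zero,
      map_add, map_mul, map_pow] at this
    rw [← h0] at this
    linear_combination this
  funext i
  fin_cases i
  · exact h0
  · exact mul_right_cancel₀ (by positivity) h1

variable {R A : Type*} [CommRing R] [CommRing A] [Algebra R A]

theorem aeval_comp_scaleY {i : A} (hi : i ^ 2 + 1 = 0) (c : A) :
    (aeval ![i, c]).comp (scaleY R) = aeval ![i, 0] := by
  refine algHom_ext fun j => ?_
  fin_cases j <;> simp [scaleY, ← mul_add_one, hi]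

theorem scaleY_not_surjective [Nontrivial A] {i : A} (hi : i ^ 2 + 1 = 0) :
    ¬ Function.Surjective (scaleY R) := by
  intro h
  obtain ⟨p, hp⟩ := h (X 1)
  have key (c : A) : c = aeval ![i, 0] p := by
    simpa [hp] using AlgHom.congr_fun (aeval_comp_scaleY hi c) p
  exact zero_ne_one ((key 0).trans (key 1).symm)

end ScaleY

open MvPolynomial in
/-- The pair `(x, yx² + y)` is a birational morphism of the affine
plane over `ℝ`, but the corresponding endomorphism `x ↦ x, y ↦ yx² + y` of `ℝ[x,y]` is
not a product of simple affine contractions. -/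
theorem real_example_birational_not_prodSAC :
    IsBirationalPair (X 0 : MvPolynomial (Fin 2) ℝ) (X 1 * X 0 ^ 2 + X 1) ∧
    ¬ IsProdOfSAC (MvPolynomial.aeval ![X 0, X 1 * X 0 ^ 2 + X 1] :
        MvPolynomial (Fin 2) ℝ →ₐ[ℝ] MvPolynomial (Fin 2) ℝ) := by
  refine ⟨isBirationalPair_X_zero_X_one_mul_X_zero_sq_add_X_one, fun h => ?_⟩
  obtain ⟨e, he⟩ :=
    IsProdOfSAC.exists_algEquiv (φ := scaleY ℝ) h (comap_scaleY_injective ℝ)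
  have hI : Complex.I ^ 2 + 1 = 0 := by simp
  exact scaleY_not_surjective hI (by rw [he]; exact e.surjective)
end

section
/- The ℂ-algebra endomorphism of ℂ[x,y] given by x→x, y→yx²+y (i.e., y → y(x+i)(x−i)) is a product of simple affine contractions: it is a composition of finitely many maps each of which is either a ℂ-algebra automorphism of ℂ[x,y] or the map τ_x given by x→x, y→xy. -/
/-!
Conjugating `τ_x` by the translation `x ↦ x + a` gives `y ↦ (x - a) y`. The maps `y ↦ q(x) y`
compose multiplicatively in `q` and are automorphisms for constant `q ≠ 0`, so `y ↦ q(x) y` is a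
product of simple affine contractions whenever `q ≠ 0` splits; here `q = x² + 1 = (x + i)(x - i)`.
-/

open MvPolynomial

section
variable {K : Type*} [Field K]

variable (K) in
noncomputable abbrev sacSubmonoid : Submonoid (MvPolynomial (Fin 2) K →ₐ[K] MvPolynomial (Fin 2) K) :=
  Submonoid.closure {ψ | IsSimpleAffineContraction ψ}

theorem isProdOfSAC_iff_mem_sacSubmonoid
    {φ : MvPolynomial (Fin 2) K →ₐ[K] MvPolynomial (Fin 2) K} :
    IsProdOfSAC φ ↔ φ ∈ sacSubmonoid K := by
  constructor
  · rintro ⟨L, hL, rfl⟩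
    exact Submonoid.list_prod_mem _ fun ψ hψ => Submonoid.subset_closure (hL ψ hψ)
  · intro hφ
    obtain ⟨L, hL, rfl⟩ := Submonoid.exists_list_of_mem_closure hφ
    exact ⟨L, hL, rfl⟩

noncomputable def shiftX (a : K) : MvPolynomial (Fin 2) K ≃ₐ[K] MvPolynomial (Fin 2) K :=
  AlgEquiv.ofAlgHom (aeval ![X 0 + C a, X 1]) (aeval ![X 0 - C a, X 1])
    (by ext i : 1; fin_cases i <;> simp)
    (by ext i : 1; fin_cases i <;> simp)

@[simp]
theorem shiftX_apply_X (a : K) (i : Fin 2) : shiftX a (X i) = ![X 0 + C a, X 1] i :=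
  aeval_X _ i

@[simp]
theorem shiftX_symm_apply_X (a : K) (i : Fin 2) :
    (shiftX a).symm (X i) = ![X 0 - C a, X 1] i :=
  aeval_X _ i

noncomputable def mulY (q : Polynomial K) : MvPolynomial (Fin 2) K →ₐ[K] MvPolynomial (Fin 2) K :=
  aeval ![X 0, Polynomial.aeval (X 0) q * X 1]

@[simp]
theorem mulY_X_zero (q : Polynomial K) : mulY q (X 0) = X 0 :=
  aeval_X _ 0

@[simp]
theorem mulY_X_one (q : Polynomial K) : mulY q (X 1) = Polynomial.aeval (X 0) q * X 1 :=
  aeval_X _ 1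

@[simp]
theorem mulY_aeval_X_zero (p q : Polynomial K) :
    mulY p (Polynomial.aeval (X 0) q) = Polynomial.aeval (X 0) q := by
  rw [← Polynomial.aeval_algHom_apply, mulY_X_zero]

theorem mulY_mul (p q : Polynomial K) : mulY (p * q) = mulY p * mulY q := by
  ext i : 1
  fin_cases i
  · simp
  · simp only [Fin.mk_one, AlgHom.mul_apply, mulY_X_one, map_mul, mulY_aeval_X_zero]
    ring

theorem mulY_one : mulY (1 : Polynomial K) = 1 := by
  ext i : 1
  fin_cases i <;> simp

noncomputable def mulYEquiv (u : (Polynomial K)ˣ) :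
    MvPolynomial (Fin 2) K ≃ₐ[K] MvPolynomial (Fin 2) K :=
  AlgEquiv.ofAlgHom (mulY u) (mulY ↑u⁻¹)
    (by rw [← AlgHom.End_toSemigroup_toMul_mul, ← mulY_mul, u.mul_inv, mulY_one]; rfl)
    (by rw [← AlgHom.End_toSemigroup_toMul_mul, ← mulY_mul, u.inv_mul, mulY_one]; rfl)

theorem mulY_X_sub_C (a : K) :
    mulY (Polynomial.X - Polynomial.C a) =
      (shiftX a).symm.toAlgHom * tauX K * (shiftX a).toAlgHom := by
  have h : (shiftX a).symm (C a) = C a := (shiftX a).symm.commutes a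
  ext i : 1
  fin_cases i <;> simp [tauX, h]

theorem mulY_mem_sacSubmonoid_of_isUnit {u : Polynomial K} (hu : IsUnit u) :
    mulY u ∈ sacSubmonoid K := by
  obtain ⟨u, rfl⟩ := hu
  exact Submonoid.subset_closure (Or.inl ⟨mulYEquiv u, rfl⟩)

theorem mulY_X_sub_C_mem_sacSubmonoid (a : K) :
    mulY (Polynomial.X - Polynomial.C a) ∈ sacSubmonoid K := by
  rw [mulY_X_sub_C]
  refine mul_mem (mul_mem ?_ ?_) ?_ <;> apply Submonoid.subset_closure
  exacts [Or.inl ⟨_, rfl⟩, Or.inr rfl, Or.inl ⟨_, rfl⟩]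

theorem mulY_multiset_prod_X_sub_C_mem_sacSubmonoid (s : Multiset K) :
    mulY (s.map (Polynomial.X - Polynomial.C ·)).prod ∈ sacSubmonoid K := by
  induction s using Multiset.induction_on with
  | empty => simp [mulY_one]
  | cons a s ih =>
    rw [Multiset.map_cons, Multiset.prod_cons, mulY_mul]
    exact mul_mem (mulY_X_sub_C_mem_sacSubmonoid a) ih

theorem isProdOfSAC_mulY_of_splits {q : Polynomial K} (hq : q.Splits) (hq0 : q ≠ 0) :
    IsProdOfSAC (mulY q) := by
  rw [isProdOfSAC_iff_mem_sacSubmonoid, hq.eq_prod_roots, mulY_mul]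
  refine mul_mem (mulY_mem_sacSubmonoid_of_isUnit ?_)
    (mulY_multiset_prod_X_sub_C_mem_sacSubmonoid _)
  exact Polynomial.isUnit_C.mpr (Polynomial.leadingCoeff_ne_zero.mpr hq0).isUnit

end

/-- Over `ℂ`, the endomorphism `x ↦ x, y ↦ yx² + y` of `ℂ[x,y]`
(i.e. `y ↦ y(x + i)(x − i)`) is a product of simple affine contractions. -/
theorem complex_example_is_prodSAC :
    IsProdOfSAC (MvPolynomial.aeval ![X 0, X 1 * X 0 ^ 2 + X 1] :
        MvPolynomial (Fin 2) ℂ →ₐ[ℂ] MvPolynomial (Fin 2) ℂ) := by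
  have h : (aeval ![X 0, X 1 * X 0 ^ 2 + X 1] :
      MvPolynomial (Fin 2) ℂ →ₐ[ℂ] MvPolynomial (Fin 2) ℂ) = mulY (Polynomial.X ^ 2 + 1) := by
    ext i : 1
    fin_cases i
    · simp
    · simp
      ring
  rw [h]
  refine isProdOfSAC_mulY_of_splits (IsAlgClosed.splits _) ?_
  exact (Polynomial.monic_X_pow_add_C 1 two_ne_zero).ne_zero
end
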